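/- Let (V_n)_{n≥1} be a sequence of finite Borel measures on (0,∞) with 𝓛_{V_n}(0) → ∞. The following are equivalent: (1) (𝓛_{V_n}) has a cutoff; (2) for all ε > 0 and c > 0, T_{V_n}(ε)·λ_{V_n}(c) → ∞; (3) there exists ε > 0 such that T_{V_n}(ε)·λ_{V_n}(c) → ∞ for all c > 0; (4) for all c > 0, τ_{V_n}(c)·λ_{V_n}(c) → ∞; (5) for all c̃ > 0 and c > 0, τ_{V_n}(c̃)·λ_{V_n}(c) → ∞; (6) there exists c̃ > 0 such that τ_{V_n}(c̃)·λ_{V_n}(c) → ∞ for all c > 0. (Since 𝓛_{V_n}(0) → ∞, for each fixed c > 0 the quantities λ_{V_n}(c), τ_{V_n}(c) are defined for all large n, and the limits are understood accordingly.) -/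

import Mathlib

open MeasureTheory Filter Set Topology

/-- The Laplace transform `𝓛_V(t) = ∫_{(0,∞)} e^{-tλ} dV(λ)` of a (finite Borel) measure `V`
on `(0,∞)`. -/
noncomputable def lap (V : Measure ℝ) (t : ℝ) : ℝ :=
  ∫ x in Ioi (0 : ℝ), Real.exp (-t * x) ∂V

/-- `V(λ) = V((0,λ])`, the nondecreasing right-continuous function associated to `V`. -/
noncomputable def cdfV (V : Measure ℝ) (l : ℝ) : ℝ :=
  (V (Ioc 0 l)).toReal

/-- The mixing time `T_V(ε) = min{t ≥ 0 : 𝓛_V(t) ≤ ε}`. -/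
noncomputable def TmixV (V : Measure ℝ) (ε : ℝ) : ℝ :=
  sInf {t : ℝ | 0 ≤ t ∧ lap V t ≤ ε}

/-- `λ_V(c) = inf{λ > 0 : V(λ) > c}`. -/
noncomputable def lamV (V : Measure ℝ) (c : ℝ) : ℝ :=
  sInf {l : ℝ | 0 < l ∧ c < cdfV V l}

/-- `τ_V(c) = sup_{λ ≥ λ_V(c)} log(1 + V(λ))/λ`. -/
noncomputable def tauV (V : Measure ℝ) (c : ℝ) : ℝ :=
  sSup ((fun l => Real.log (1 + cdfV V l) / l) '' Ici (lamV V c))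

/-- `t` is a cutoff time for the sequence of Laplace transforms `(𝓛_{V_n})` (in the regime
`𝓛_{V_n}(0) → ∞`): `𝓛_{V_n}(a t_n) → 0` for `a > 1` and `𝓛_{V_n}(a t_n) → ∞` for `0 < a < 1`. -/
def IsLapCutoffTime (V : ℕ → Measure ℝ) (t : ℕ → ℝ) : Prop :=
  (∀ᶠ n in atTop, 0 < t n) ∧
    (∀ a : ℝ, 1 < a → Tendsto (fun n => lap (V n) (a * t n)) atTop (𝓝 0)) ∧
    (∀ a : ℝ, a ∈ Ioo (0 : ℝ) 1 → Tendsto (fun n => lap (V n) (a * t n)) atTop atTop)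

/-- The sequence of Laplace transforms `(𝓛_{V_n})` has a cutoff. -/
def LapCutoff (V : ℕ → Measure ℝ) : Prop :=
  ∃ t : ℕ → ℝ, IsLapCutoffTime V t

/-!
Two estimates on `𝓛_V` drive the proof; write `P_V(c) = τ_V(c) λ_V(c)`. From below,
`𝓛_V(t) ≥ e^{-tl} V(l)`: at `l = λ_V(c)` this gives `𝓛_V(t) ≥ c e^{-t λ_V(c)}`, and at a near
maximiser of `log(1 + V(l))/l` it gives `𝓛_V(a τ_V(c)) ≥ e^{(1-a) P_V(c)/2} - 1` for `a < 1`.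
From above, `V ≤ c` before `λ_V(c)` and `V(x) ≤ e^{τ_V(c) x}` after it, so cutting `[λ_V(c), ∞)`
into intervals of length `h` bounds `𝓛_V(t)` by `c` plus a geometric series of ratio
`e^{-(t - τ_V(c)) h}`, which is small once `(t - τ_V(c)) λ_V(c)` is large.

Hence `τ_n(1)` is a cutoff time when `P_n(c) → ∞` for all `c`; a cutoff time `t_n` satisfies
`t_n λ_n(c) → ∞` and `T_n(ε) ≥ t_n / 2`; and if `P_n(c)` stayed bounded, the upper bound would
keep `T_n(ε) λ_n(c')` bounded for a level `c' < ε`. The level in `τ` is irrelevant because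
`τ_V(c)` decreases in `c` but stops changing once `P_V(c)` is large.
-/
section Measure

variable (V : Measure ℝ)

lemma cdfV_nonneg (l : ℝ) : 0 ≤ cdfV V l := measureReal_nonneg

lemma cdfV_of_nonpos {l : ℝ} (hl : l ≤ 0) : cdfV V l = 0 := by
  simp [cdfV, Ioc_eq_empty_of_le hl]

variable [IsFiniteMeasure V]

lemma monotone_cdfV : Monotone (cdfV V) := fun _ _ hab =>
  measureReal_mono (Ioc_subset_Ioc_right hab)

lemma cdfV_le_measureReal_Ioi (l : ℝ) : cdfV V l ≤ V.real (Ioi 0) :=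
  measureReal_mono Ioc_subset_Ioi_self

lemma tendsto_cdfV_atTop : Tendsto (cdfV V) atTop (𝓝 (V.real (Ioi 0))) := by
  have h := tendsto_measure_iUnion_atTop (μ := V)
    (s := fun r : ℝ => Ioc 0 r) fun _ _ hab => Ioc_subset_Ioc_right hab
  rw [iUnion_Ioc_right] at h
  exact (ENNReal.tendsto_toReal (measure_ne_top V _)).comp h

lemma tendsto_cdfV_nhdsGT (l : ℝ) : Tendsto (cdfV V) (𝓝[>] l) (𝓝 (cdfV V l)) := by
  have hInter : ⋂ r > l, Ioc (0 : ℝ) r = Ioc 0 l := by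
    ext x
    simp only [mem_iInter, mem_Ioc]
    refine ⟨fun h => ?_, fun h r hr => ⟨h.1, h.2.trans hr.le⟩⟩
    obtain ⟨r, hr⟩ := exists_gt l
    exact ⟨(h r hr).1, le_of_forall_gt_imp_ge_of_dense fun r hr => (h r hr).2⟩
  have h := tendsto_measure_biInter_gt (μ := V) (s := fun r => Ioc (0 : ℝ) r) (a := l)
    (fun _ _ => measurableSet_Ioc.nullMeasurableSet)
    (fun _ _ _ hij => Ioc_subset_Ioc_right hij) ⟨l + 1, by linarith, measure_ne_top V _⟩
  rw [hInter] at h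
  exact (ENNReal.tendsto_toReal (measure_ne_top V _)).comp h

lemma measureReal_Ioo_le_of_cdfV_le {b c : ℝ} (h : ∀ x < b, cdfV V x ≤ c) :
    V.real (Ioo 0 b) ≤ c := by
  have hc : 0 ≤ c := (cdfV_nonneg V (b - 1)).trans (h _ (by linarith))
  have hUnion : Ioo (0 : ℝ) b = ⋃ n : ℕ, Ioc 0 (b - 1 / (n + 1)) := by
    ext x
    simp only [mem_Ioo, mem_iUnion, mem_Ioc]
    refine ⟨fun hx => ?_, fun ⟨n, hx0, hxn⟩ =>
      ⟨hx0, hxn.trans_lt (sub_lt_self _ Nat.one_div_pos_of_nat)⟩⟩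
    obtain ⟨n, hn⟩ := exists_nat_one_div_lt (sub_pos.2 hx.2)
    exact ⟨n, hx.1, by linarith⟩
  have hmono : Monotone fun n : ℕ => Ioc (0 : ℝ) (b - 1 / (n + 1)) := fun _ _ hmn =>
    Ioc_subset_Ioc_right (by linarith [Nat.one_div_le_one_div (α := ℝ) hmn])
  have hle : V (Ioo 0 b) ≤ ENNReal.ofReal c := by
    rw [hUnion, hmono.measure_iUnion]
    exact iSup_le fun n => (ENNReal.le_ofReal_iff_toReal_le (measure_ne_top V _) hc).2
      (h _ (sub_lt_self _ Nat.one_div_pos_of_nat))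
  exact ENNReal.toReal_le_of_le_ofReal hc hle

end Measure

section Laplace

variable (V : Measure ℝ)

lemma lap_zero : lap V 0 = V.real (Ioi 0) := by
  simp [lap]

lemma lap_nonneg (t : ℝ) : 0 ≤ lap V t :=
  setIntegral_nonneg measurableSet_Ioi fun _ _ => (Real.exp_pos _).le

variable [IsFiniteMeasure V]

lemma exp_neg_mul_le_one {t x : ℝ} (ht : 0 ≤ t) (hx : 0 ≤ x) : Real.exp (-t * x) ≤ 1 :=
  Real.exp_le_one_iff.2 (by nlinarith)

lemma integrableOn_exp_neg_mul {t : ℝ} (ht : 0 ≤ t) {s : Set ℝ} (hs : s ⊆ Ioi 0) :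
    IntegrableOn (fun x => Real.exp (-t * x)) s V := by
  refine IntegrableOn.mono_set ?_ hs
  refine (integrable_const (1 : ℝ)).mono'
    (Real.continuous_exp.comp (continuous_const.mul continuous_id)).aestronglyMeasurable ?_
  filter_upwards [ae_restrict_mem measurableSet_Ioi] with x hx
  rw [Real.norm_of_nonneg (Real.exp_pos _).le]
  exact exp_neg_mul_le_one ht (le_of_lt hx)

lemma lap_le_lap {s t : ℝ} (hs : 0 ≤ s) (hst : s ≤ t) : lap V t ≤ lap V s :=
  setIntegral_mono_on (integrableOn_exp_neg_mul V (hs.trans hst) subset_rfl)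
    (integrableOn_exp_neg_mul V hs subset_rfl) measurableSet_Ioi fun x hx =>
      Real.exp_le_exp.2 (by nlinarith [mem_Ioi.1 hx])

lemma tendsto_lap_atTop : Tendsto (lap V) atTop (𝓝 0) := by
  have h := tendsto_integral_filter_of_dominated_convergence (μ := V.restrict (Ioi 0))
    (F := fun t x => Real.exp (-t * x)) (f := fun _ => 0) (fun _ => 1)
    (Eventually.of_forall fun _ =>
      (Real.continuous_exp.comp (continuous_const.mul continuous_id)).aestronglyMeasurable)
    (by
      filter_upwards [eventually_ge_atTop (0 : ℝ)] with t ht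
      filter_upwards [ae_restrict_mem measurableSet_Ioi] with x hx
      rw [Real.norm_of_nonneg (Real.exp_pos _).le]
      exact exp_neg_mul_le_one ht (le_of_lt hx))
    (integrable_const 1)
    (by
      filter_upwards [ae_restrict_mem measurableSet_Ioi] with x hx
      exact Real.tendsto_exp_atBot.comp
        (tendsto_neg_atTop_atBot.atBot_mul_const (mem_Ioi.1 hx)))
  change Tendsto (fun t => lap V t) _ _
  simpa [lap] using h

lemma setIntegral_exp_neg_mul_le {t a : ℝ} (ht : 0 ≤ t) {s : Set ℝ} (hs : MeasurableSet s)
    (hs0 : s ⊆ Ioi 0) (ha : ∀ x ∈ s, a ≤ x) :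
    ∫ x in s, Real.exp (-t * x) ∂V ≤ V.real s * Real.exp (-t * a) := by
  have h := setIntegral_mono_on (integrableOn_exp_neg_mul V ht hs0)
    (integrableOn_const (measure_ne_top V s)) hs
    fun x hx => Real.exp_le_exp.2 (by nlinarith [ha x hx] : -t * x ≤ -t * a)
  rwa [setIntegral_const, smul_eq_mul] at h

lemma exp_neg_mul_mul_cdfV_le_lap {t l : ℝ} (ht : 0 ≤ t) :
    Real.exp (-t * l) * cdfV V l ≤ lap V t := by
  have h := setIntegral_mono_on (integrableOn_const (measure_ne_top V (Ioc 0 l)))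
    (integrableOn_exp_neg_mul V ht Ioc_subset_Ioi_self) measurableSet_Ioc
    fun x hx => Real.exp_le_exp.2 (by nlinarith [hx.2] : -t * l ≤ -t * x)
  rw [setIntegral_const, smul_eq_mul, mul_comm] at h
  exact h.trans (setIntegral_mono_set (integrableOn_exp_neg_mul V ht subset_rfl)
    (Eventually.of_forall fun _ => (Real.exp_pos _).le) Ioc_subset_Ioi_self.eventuallyLE)

end Laplace

section Lam

variable (V : Measure ℝ) {c : ℝ}

lemma bddBelow_lamV_set (c : ℝ) : BddBelow {l : ℝ | 0 < l ∧ c < cdfV V l} :=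
  ⟨0, fun _ hl => hl.1.le⟩

lemma cdfV_le_of_lt_lamV (hc : 0 ≤ c) {x : ℝ} (hx : x < lamV V c) : cdfV V x ≤ c := by
  by_contra! hcx
  rcases le_or_gt x 0 with hx0 | hx0
  · exact (cdfV_of_nonpos V hx0 ▸ hcx).not_ge hc
  · exact (csInf_le (bddBelow_lamV_set V c) ⟨hx0, hcx⟩).not_gt hx

variable [IsFiniteMeasure V]

lemma lamV_set_nonempty (hM : c < V.real (Ioi 0)) :
    {l : ℝ | 0 < l ∧ c < cdfV V l}.Nonempty := by
  obtain ⟨l, hl⟩ := ((tendsto_cdfV_atTop V).eventually (eventually_gt_nhds hM)).and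
    (eventually_gt_atTop 0) |>.exists
  exact ⟨l, hl.2, hl.1⟩

lemma lamV_pos (hc : 0 < c) (hM : c < V.real (Ioi 0)) : 0 < lamV V c := by
  obtain ⟨u, hu, hsub⟩ := mem_nhdsGT_iff_exists_Ioo_subset.1
    ((tendsto_cdfV_nhdsGT V 0).eventually (eventually_lt_nhds (by rwa [cdfV_of_nonpos V le_rfl])))
  refine hu.trans_le (le_csInf (lamV_set_nonempty V hM) fun l ⟨hl0, hcl⟩ => ?_)
  by_contra! hlu
  exact (hsub ⟨hl0, hlu⟩ : cdfV V l < c).not_gt hcl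

lemma le_cdfV_lamV (hM : c < V.real (Ioi 0)) : c ≤ cdfV V (lamV V c) := by
  refine ge_of_tendsto (tendsto_cdfV_nhdsGT V _) ?_
  filter_upwards [self_mem_nhdsWithin] with r hr
  obtain ⟨l, hl, hlr⟩ := exists_lt_of_csInf_lt (lamV_set_nonempty V hM) hr
  exact hl.2.le.trans (monotone_cdfV V hlr.le)

lemma lamV_mono {c₀ c₁ : ℝ} (h : c₀ ≤ c₁) (hM : c₁ < V.real (Ioi 0)) :
    lamV V c₀ ≤ lamV V c₁ :=
  csInf_le_csInf (bddBelow_lamV_set V c₀) (lamV_set_nonempty V hM) fun _ hl =>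
    ⟨hl.1, h.trans_lt hl.2⟩

lemma measureReal_Ioo_lamV_le (hc : 0 ≤ c) : V.real (Ioo 0 (lamV V c)) ≤ c :=
  measureReal_Ioo_le_of_cdfV_le V fun _ hx => cdfV_le_of_lt_lamV V hc hx

end Lam

section Tau

variable (V : Measure ℝ) {c : ℝ}

lemma exists_lt_log_div (c : ℝ) {d : ℝ} (hd : 0 < d) :
    ∃ l, lamV V c ≤ l ∧ tauV V c - d < Real.log (1 + cdfV V l) / l := by
  obtain ⟨_, ⟨l, hl, rfl⟩, hlt⟩ :=
    exists_lt_of_lt_csSup (image_nonempty.2 nonempty_Ici) (sub_lt_self (tauV V c) hd)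
  exact ⟨l, hl, hlt⟩

variable [IsFiniteMeasure V]

lemma bddAbove_tauV_set (hc : 0 < c) (hM : c < V.real (Ioi 0)) :
    BddAbove ((fun l => Real.log (1 + cdfV V l) / l) '' Ici (lamV V c)) := by
  refine ⟨Real.log (1 + V.real (Ioi 0)) / lamV V c, ?_⟩
  rintro _ ⟨l, hl, rfl⟩
  have h0 := cdfV_nonneg V l
  exact div_le_div₀ (Real.log_nonneg (by linarith [cdfV_le_measureReal_Ioi V l]))
    (Real.log_le_log (by linarith) (by linarith [cdfV_le_measureReal_Ioi V l]))
    (lamV_pos V hc hM) hl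

lemma log_div_le_tauV (hc : 0 < c) (hM : c < V.real (Ioi 0)) {x : ℝ} (hx : lamV V c ≤ x) :
    Real.log (1 + cdfV V x) / x ≤ tauV V c :=
  le_csSup (bddAbove_tauV_set V hc hM) (mem_image_of_mem _ hx)

lemma log_one_add_div_lamV_le_tauV (hc : 0 < c) (hM : c < V.real (Ioi 0)) :
    Real.log (1 + c) / lamV V c ≤ tauV V c :=
  le_trans (div_le_div_of_nonneg_right
      (Real.log_le_log (by linarith) (by linarith [le_cdfV_lamV V hM]))
      (lamV_pos V hc hM).le)
    (log_div_le_tauV V hc hM le_rfl)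

lemma tauV_pos (hc : 0 < c) (hM : c < V.real (Ioi 0)) : 0 < tauV V c :=
  (div_pos (Real.log_pos (by linarith)) (lamV_pos V hc hM)).trans_le
    (log_one_add_div_lamV_le_tauV V hc hM)

lemma one_add_cdfV_le_exp (hc : 0 < c) (hM : c < V.real (Ioi 0)) {x : ℝ}
    (hx : lamV V c ≤ x) : 1 + cdfV V x ≤ Real.exp (tauV V c * x) := by
  have hx0 : 0 < x := (lamV_pos V hc hM).trans_le hx
  rw [← Real.exp_log (by linarith [cdfV_nonneg V x] : 0 < 1 + cdfV V x)]
  exact Real.exp_le_exp.2 ((div_le_iff₀ hx0).1 (log_div_le_tauV V hc hM hx))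

lemma tauV_anti {c₀ c₁ : ℝ} (hc₀ : 0 < c₀) (h : c₀ ≤ c₁) (hM : c₁ < V.real (Ioi 0)) :
    tauV V c₁ ≤ tauV V c₀ :=
  csSup_le_csSup (bddAbove_tauV_set V hc₀ (h.trans_lt hM)) (image_nonempty.2 nonempty_Ici)
    (image_mono (Ici_subset_Ici.2 (lamV_mono V h hM)))

/-- Below `λ_V(c₁)` the quotient `log(1 + V(l))/l` is at most `log(1 + c₁)/λ_V(c₀)`, so once
`τ_V(c₀)` exceeds this value the supremum defining it is a supremum over `l ≥ λ_V(c₁)`. -/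
lemma tauV_le_tauV_of_log_lt {c₀ c₁ : ℝ} (hc₀ : 0 < c₀) (h : c₀ ≤ c₁)
    (hM : c₁ < V.real (Ioi 0)) (hbig : Real.log (1 + c₁) < tauV V c₀ * lamV V c₀) :
    tauV V c₀ ≤ tauV V c₁ := by
  have hlam₀ := lamV_pos V hc₀ (h.trans_lt hM)
  have hbound : tauV V c₀ ≤ max (Real.log (1 + c₁) / lamV V c₀) (tauV V c₁) := by
    refine csSup_le (image_nonempty.2 nonempty_Ici) ?_
    rintro _ ⟨l, hl, rfl⟩
    rcases lt_or_ge l (lamV V c₁) with hl₁ | hl₁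
    · refine le_max_of_le_left (div_le_div₀ (Real.log_nonneg (by linarith)) ?_ hlam₀ hl)
      exact Real.log_le_log (by linarith [cdfV_nonneg V l])
        (by linarith [cdfV_le_of_lt_lamV V (hc₀.le.trans h) hl₁])
    · exact le_max_of_le_right (log_div_le_tauV V (hc₀.trans_le h) hM hl₁)
  have hlt : Real.log (1 + c₁) / lamV V c₀ < tauV V c₀ := (div_lt_iff₀ hlam₀).2 hbig
  exact (le_max_iff.1 hbound).resolve_left hlt.not_ge

lemma tauV_mul_lamV_le_max {c₀ c₁ : ℝ} (hc₀ : 0 < c₀) (h : c₀ ≤ c₁)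
    (hM : c₁ < V.real (Ioi 0)) :
    tauV V c₀ * lamV V c₀ ≤ max (Real.log (1 + c₁)) (tauV V c₁ * lamV V c₁) := by
  rcases le_or_gt (tauV V c₀ * lamV V c₀) (Real.log (1 + c₁)) with hle | hlt
  · exact le_max_of_le_left hle
  · refine le_max_of_le_right (mul_le_mul (tauV_le_tauV_of_log_lt V hc₀ h hM hlt)
      (lamV_mono V h hM) (lamV_pos V hc₀ (h.trans_lt hM)).le
      (tauV_pos V (hc₀.trans_le h) hM).le)

end Tau

section LaplaceBounds

variable (V : Measure ℝ) [IsFiniteMeasure V]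

lemma Ici_eq_iUnion_Ico_add_mul (a : ℝ) {h : ℝ} (hh : 0 < h) :
    Ici a = ⋃ k : ℕ, Ico (a + k * h) (a + (k + 1) * h) := by
  ext x
  simp only [mem_Ici, mem_iUnion, mem_Ico]
  refine ⟨fun hx => ⟨⌊(x - a) / h⌋₊, ?_, ?_⟩,
    fun ⟨k, hk, _⟩ => by nlinarith [k.cast_nonneg (α := ℝ)]⟩
  · nlinarith [Nat.floor_le (div_nonneg (sub_nonneg.2 hx) hh.le), mul_div_cancel₀ (x - a) hh.ne']
  · nlinarith [Nat.lt_floor_add_one ((x - a) / h), mul_div_cancel₀ (x - a) hh.ne']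

lemma pairwise_disjoint_Ico_add_mul (a h : ℝ) :
    Pairwise (Function.onFun Disjoint fun k : ℕ => Ico (a + k * h) (a + (k + 1) * h)) := by
  refine (pairwise_disjoint_Ico_add_zsmul a h).comp_of_injective
    (f := fun k : ℕ => (k : ℤ)) Nat.cast_injective |>.mono fun i j hij => ?_
  simpa [Function.onFun, zsmul_eq_mul] using hij

lemma setIntegral_Ici_exp_neg_mul_le {τ lam h t : ℝ} (hlam : 0 < lam) (hh : 0 < h) (ht : 0 ≤ t)
    (hτt : τ < t) (hgrowth : ∀ x, lam ≤ x → cdfV V x ≤ Real.exp (τ * x)) :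
    ∫ x in Ici lam, Real.exp (-t * x) ∂V ≤
      Real.exp (τ * h) * Real.exp (-(t - τ) * lam) / (1 - Real.exp (-(t - τ) * h)) := by
  set s : ℕ → Set ℝ := fun k => Ico (lam + k * h) (lam + (k + 1) * h)
  set r := Real.exp (-(t - τ) * h)
  have hr1 : r < 1 := Real.exp_lt_one_iff.2 (by nlinarith)
  have hstart (k : ℕ) : lam ≤ lam + k * h := le_add_of_nonneg_right (by positivity)
  have hs0 (k : ℕ) : s k ⊆ Ioi 0 := fun x hx => hlam.trans_le ((hstart k).trans hx.1)
  have hsum := hasSum_integral_iUnion (μ := V) (f := fun x => Real.exp (-t * x))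
    (fun k => measurableSet_Ico) (pairwise_disjoint_Ico_add_mul lam h)
    (integrableOn_exp_neg_mul V ht (iUnion_subset hs0))
  rw [← Ici_eq_iUnion_Ico_add_mul lam hh] at hsum
  have hterm (k : ℕ) : ∫ x in s k, Real.exp (-t * x) ∂V ≤
      Real.exp (τ * h) * Real.exp (-(t - τ) * lam) * r ^ k := by
    have hmass : V.real (s k) ≤ Real.exp (τ * (lam + (k + 1) * h)) :=
      (measureReal_mono (show s k ⊆ Ioc 0 (lam + (k + 1) * h) from
        fun x hx => ⟨hs0 k hx, hx.2.le⟩)).trans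
        (hgrowth _ ((hstart k).trans (by linarith)))
    calc ∫ x in s k, Real.exp (-t * x) ∂V
        ≤ V.real (s k) * Real.exp (-t * (lam + k * h)) :=
          setIntegral_exp_neg_mul_le V ht measurableSet_Ico (hs0 k) fun x hx => hx.1
      _ ≤ Real.exp (τ * (lam + (k + 1) * h)) * Real.exp (-t * (lam + k * h)) :=
          mul_le_mul_of_nonneg_right hmass (Real.exp_pos _).le
      _ = Real.exp (τ * h) * Real.exp (-(t - τ) * lam) * r ^ k := by
          rw [← Real.exp_nat_mul, ← Real.exp_add, ← Real.exp_add, ← Real.exp_add]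
          ring_nf
  have hgeom := (hasSum_geometric_of_lt_one (Real.exp_pos _).le hr1).mul_left
    (Real.exp (τ * h) * Real.exp (-(t - τ) * lam))
  rw [← div_eq_mul_inv] at hgeom
  exact hasSum_le hterm hsum hgeom

lemma lap_le_of_cdfV_le {c τ lam h t : ℝ} (hlam : 0 < lam) (hh : 0 < h) (ht : 0 ≤ t)
    (hτt : τ < t) (hbelow : ∀ x < lam, cdfV V x ≤ c)
    (habove : ∀ x, lam ≤ x → cdfV V x ≤ Real.exp (τ * x)) :
    lap V t ≤ c + Real.exp (τ * h) * Real.exp (-(t - τ) * lam) /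
      (1 - Real.exp (-(t - τ) * h)) := by
  have hsplit : lap V t = (∫ x in Ioo 0 lam, Real.exp (-t * x) ∂V) +
      ∫ x in Ici lam, Real.exp (-t * x) ∂V := by
    rw [lap, ← Ioo_union_Ici_eq_Ioi hlam]
    exact setIntegral_union (disjoint_left.2 fun x hx hx' => hx.2.not_ge hx')
      measurableSet_Ici (integrableOn_exp_neg_mul V ht Ioo_subset_Ioi_self)
      (integrableOn_exp_neg_mul V ht fun x hx => hlam.trans_le hx)
  have hIoo : ∫ x in Ioo 0 lam, Real.exp (-t * x) ∂V ≤ c := by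
    have h := setIntegral_exp_neg_mul_le V (s := Ioo 0 lam) ht measurableSet_Ioo
      Ioo_subset_Ioi_self fun x hx => hx.1.le
    rw [mul_zero, Real.exp_zero, mul_one] at h
    exact h.trans (measureReal_Ioo_le_of_cdfV_le V hbelow)
  rw [hsplit]
  gcongr
  exact setIntegral_Ici_exp_neg_mul_le V hlam hh ht hτt habove

variable {c : ℝ}

lemma lap_mul_tauV_le (hc : 0 < c) (hM : c < V.real (Ioi 0)) {a : ℝ} (ha : 1 < a) :
    lap V (a * tauV V c) ≤ c + Real.exp (-((a - 1) / 2 * (tauV V c * lamV V c))) /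
      (1 - Real.exp (-((a - 1) ^ 2 / 2 * (tauV V c * lamV V c)))) := by
  have hlam := lamV_pos V hc hM
  have htau := tauV_pos V hc hM
  have h := lap_le_of_cdfV_le V (h := (a - 1) / 2 * lamV V c) (t := a * tauV V c) hlam
    (by nlinarith) (by nlinarith) (by nlinarith) (fun x hx => cdfV_le_of_lt_lamV V hc.le hx)
    (fun x hx => by linarith [one_add_cdfV_le_exp V hc hM hx])
  rw [← Real.exp_add, show a * tauV V c - tauV V c = (a - 1) * tauV V c by ring] at h
  convert h using 4 <;> ring_nf

lemma lap_tauV_add_le (hc : 0 < c) (hM : c < V.real (Ioi 0)) {u : ℝ} (hu : 0 < u) :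
    lap V (tauV V c + u / lamV V c) ≤
      c + Real.exp (tauV V c * lamV V c) * (Real.exp (-u) / (1 - Real.exp (-u))) := by
  have hlam := lamV_pos V hc hM
  have hu' : 0 < u / lamV V c := div_pos hu hlam
  have h := lap_le_of_cdfV_le V (h := lamV V c) (t := tauV V c + u / lamV V c) hlam hlam
    (add_pos (tauV_pos V hc hM) hu').le (lt_add_of_pos_right _ hu')
    (fun x hx => cdfV_le_of_lt_lamV V hc.le hx)
    (fun x hx => by linarith [one_add_cdfV_le_exp V hc hM hx])
  rwa [add_sub_cancel_left, neg_mul, div_mul_cancel₀ u hlam.ne', mul_div_assoc] at h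

lemma exp_sub_one_le_lap_mul_tauV (hc : 0 < c) (hM : c < V.real (Ioi 0)) {a : ℝ}
    (ha : 0 < a) (ha1 : a < 1) :
    Real.exp ((1 - a) / 2 * (tauV V c * lamV V c)) - 1 ≤ lap V (a * tauV V c) := by
  have hlam := lamV_pos V hc hM
  have htau := tauV_pos V hc hM
  obtain ⟨l, hl, hlt⟩ := exists_lt_log_div V c (d := (1 - a) / 2 * tauV V c) (by nlinarith)
  have hl0 : 0 < l := hlam.trans_le hl
  have hgrowth : Real.exp ((tauV V c - (1 - a) / 2 * tauV V c) * l) ≤ 1 + cdfV V l := by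
    rw [← Real.exp_log (by linarith [cdfV_nonneg V l] : 0 < 1 + cdfV V l)]
    exact Real.exp_le_exp.2 ((lt_div_iff₀ hl0).1 hlt).le
  have hmono : Real.exp ((1 - a) / 2 * (tauV V c * lamV V c)) ≤
      Real.exp ((1 - a) / 2 * (tauV V c * l)) :=
    Real.exp_le_exp.2 (by gcongr)
  have hsmall : Real.exp (-(a * tauV V c) * l) ≤ 1 :=
    exp_neg_mul_le_one (by positivity) hl0.le
  have hexp : Real.exp (-(a * tauV V c) * l) *
      Real.exp ((tauV V c - (1 - a) / 2 * tauV V c) * l) =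
      Real.exp ((1 - a) / 2 * (tauV V c * l)) := by
    rw [← Real.exp_add]
    ring_nf
  calc Real.exp ((1 - a) / 2 * (tauV V c * lamV V c)) - 1
      ≤ Real.exp (-(a * tauV V c) * l) *
          Real.exp ((tauV V c - (1 - a) / 2 * tauV V c) * l) - Real.exp (-(a * tauV V c) * l) := by
        linarith
    _ ≤ Real.exp (-(a * tauV V c) * l) * cdfV V l := by
        nlinarith [Real.exp_pos (-(a * tauV V c) * l)]
    _ ≤ lap V (a * tauV V c) := exp_neg_mul_mul_cdfV_le_lap V (by positivity)

lemma mul_exp_neg_mul_lamV_le_lap (hM : c < V.real (Ioi 0)) {t : ℝ} (ht : 0 ≤ t) :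
    c * Real.exp (-t * lamV V c) ≤ lap V t := by
  rw [mul_comm]
  exact (mul_le_mul_of_nonneg_left (le_cdfV_lamV V hM) (Real.exp_pos _).le).trans
    (exp_neg_mul_mul_cdfV_le_lap V ht)

end LaplaceBounds

section Mixing

variable (V : Measure ℝ) {ε : ℝ}

lemma TmixV_le {t : ℝ} (ht : 0 ≤ t) (hlap : lap V t ≤ ε) : TmixV V ε ≤ t :=
  csInf_le ⟨0, fun _ hs => hs.1⟩ ⟨ht, hlap⟩

variable [IsFiniteMeasure V]

lemma le_TmixV (hε : 0 < ε) {t : ℝ} (hlap : ε < lap V t) : t ≤ TmixV V ε := by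
  obtain ⟨u, hu, hu0⟩ :=
    ((tendsto_lap_atTop V).eventually (eventually_le_nhds hε)).and (eventually_ge_atTop 0)
      |>.exists
  refine le_csInf ⟨u, hu0, hu⟩ fun s ⟨hs0, hs⟩ => ?_
  by_contra! hst
  exact (hlap.trans_le (lap_le_lap V hs0 hst.le)).not_ge hs

lemma TmixV_mul_lamV_le {c : ℝ} (hc : 0 < c) (hM : c < V.real (Ioi 0)) {u : ℝ} (hu : 0 < u)
    (h : c + Real.exp (tauV V c * lamV V c) * (Real.exp (-u) / (1 - Real.exp (-u))) ≤ ε) :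
    TmixV V ε * lamV V c ≤ tauV V c * lamV V c + u := by
  have hlam := lamV_pos V hc hM
  have hT := TmixV_le V (add_pos (tauV_pos V hc hM) (div_pos hu hlam)).le
    ((lap_tauV_add_le V hc hM hu).trans h)
  calc TmixV V ε * lamV V c ≤ (tauV V c + u / lamV V c) * lamV V c := by gcongr
    _ = tauV V c * lamV V c + u := by field_simp

end Mixing

lemma tendsto_exp_neg_div_one_sub_exp_neg {α β : ℝ} (hα : 0 < α) (hβ : 0 < β) :
    Tendsto (fun x => Real.exp (-(α * x)) / (1 - Real.exp (-(β * x)))) atTop (𝓝 0) := by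
  have hexp {γ : ℝ} (hγ : 0 < γ) : Tendsto (fun x => Real.exp (-(γ * x))) atTop (𝓝 0) :=
    Real.tendsto_exp_comp_nhds_zero.2
      (tendsto_neg_atTop_atBot.comp (tendsto_id.const_mul_atTop hγ))
  have h := (hexp hα).div ((hexp hβ).const_sub 1) (by norm_num)
  rw [sub_zero, div_one] at h
  exact h

section Sequence

variable {V : ℕ → Measure ℝ} (hdiv : Tendsto (fun n => lap (V n) 0) atTop atTop)
include hdiv

lemma eventually_lt_measureReal_Ioi (C : ℝ) : ∀ᶠ n in atTop, C < (V n).real (Ioi 0) := by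
  simpa only [lap_zero] using hdiv.eventually_gt_atTop C

variable [∀ n, IsFiniteMeasure (V n)]

lemma eventually_tauV_le_tauV {c₀ c₁ : ℝ} (hc₀ : 0 < c₀) (hc₁ : 0 < c₁)
    (h : Tendsto (fun n => tauV (V n) c₀ * lamV (V n) c₀) atTop atTop) :
    ∀ᶠ n in atTop, tauV (V n) c₀ ≤ tauV (V n) c₁ := by
  filter_upwards [eventually_lt_measureReal_Ioi hdiv (max c₀ c₁),
    h.eventually_gt_atTop (Real.log (1 + c₁))] with n hM hbig
  rcases le_total c₀ c₁ with hle | hle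
  · exact tauV_le_tauV_of_log_lt (V n) hc₀ hle ((le_max_right _ _).trans_lt hM) hbig
  · exact tauV_anti (V n) hc₁ hle ((le_max_left _ _).trans_lt hM)

lemma tendsto_tauV_mul_lamV_of_tendsto {c₀ c₁ c : ℝ} (hc₀ : 0 < c₀) (hc₁ : 0 < c₁) (hc : 0 < c)
    (h₀ : Tendsto (fun n => tauV (V n) c₀ * lamV (V n) c₀) atTop atTop)
    (h : Tendsto (fun n => tauV (V n) c₀ * lamV (V n) c) atTop atTop) :
    Tendsto (fun n => tauV (V n) c₁ * lamV (V n) c) atTop atTop := by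
  refine tendsto_atTop_mono' _ ?_ h
  filter_upwards [eventually_tauV_le_tauV hdiv hc₀ hc₁ h₀, eventually_lt_measureReal_Ioi hdiv c]
    with n hle hM
  exact mul_le_mul_of_nonneg_right hle (lamV_pos (V n) hc hM).le

lemma tendsto_TmixV_mul_lamV_of_isLapCutoffTime {t : ℕ → ℝ} (ht : IsLapCutoffTime V t)
    {ε c : ℝ} (hε : 0 < ε) (hc : 0 < c) :
    Tendsto (fun n => TmixV (V n) ε * lamV (V n) c) atTop atTop := by
  obtain ⟨hpos, hgt, hlt⟩ := ht
  have hexp : Tendsto (fun n => Real.exp (-(2 * t n) * lamV (V n) c)) atTop (𝓝 0) := by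
    have hlap := (hgt 2 one_lt_two).div_const c
    rw [zero_div] at hlap
    refine squeeze_zero' (Eventually.of_forall fun n => (Real.exp_pos _).le) ?_ hlap
    filter_upwards [hpos, eventually_lt_measureReal_Ioi hdiv c] with n hn hM
    rw [le_div_iff₀ hc, mul_comm]
    exact mul_exp_neg_mul_lamV_le_lap (V n) hM (by positivity)
  have htl : Tendsto (fun n => t n * lamV (V n) c) atTop atTop := by
    refine ((tendsto_neg_atBot_atTop.comp (Real.tendsto_exp_comp_nhds_zero.1 hexp)).const_mul_atTop
      (by norm_num : (0 : ℝ) < 1 / 2)).congr fun n => ?_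
    simp only [Function.comp_apply]
    ring
  refine tendsto_atTop_mono' _ ?_ (htl.const_mul_atTop (by norm_num : (0 : ℝ) < 1 / 2))
  filter_upwards [(hlt (1 / 2) ⟨by norm_num, by norm_num⟩).eventually_gt_atTop ε,
    eventually_lt_measureReal_Ioi hdiv c] with n hn hM
  rw [← mul_assoc]
  exact mul_le_mul_of_nonneg_right (le_TmixV (V n) hε hn) (lamV_pos (V n) hc hM).le

lemma tendsto_tauV_mul_lamV_of_TmixV {ε : ℝ} (hε : 0 < ε)
    (h : ∀ c > (0 : ℝ), Tendsto (fun n => TmixV (V n) ε * lamV (V n) c) atTop atTop)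
    {c : ℝ} (hc : 0 < c) :
    Tendsto (fun n => tauV (V n) c * lamV (V n) c) atTop atTop := by
  set c' := min c ε / 2 with hc'_def
  have hc' : 0 < c' := by positivity
  have hc'c : c' ≤ c := by linarith [min_le_left c ε, hc'_def]
  have hc'ε : c' ≤ ε / 2 := by linarith [min_le_right c ε, hc'_def]
  rw [tendsto_atTop]
  intro K
  set K' := max K (Real.log (1 + c))
  obtain ⟨u, hsmall, hu⟩ : ∃ u, Real.exp K' * (Real.exp (-u) / (1 - Real.exp (-u))) ≤ ε / 2 ∧
      0 < u := by
    have hg := (tendsto_exp_neg_div_one_sub_exp_neg one_pos one_pos).const_mul (Real.exp K')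
    simp only [one_mul, mul_zero] at hg
    exact ((hg.eventually (eventually_le_nhds (half_pos hε))).and (eventually_gt_atTop 0)).exists
  filter_upwards [(h c' hc').eventually_gt_atTop (K' + u), eventually_lt_measureReal_Ioi hdiv c]
    with n hT hM
  have hP' : K' < tauV (V n) c' * lamV (V n) c' := by
    by_contra! hle
    have hbound : c' + Real.exp (tauV (V n) c' * lamV (V n) c') *
        (Real.exp (-u) / (1 - Real.exp (-u))) ≤ ε := by
      have hg0 : 0 ≤ Real.exp (-u) / (1 - Real.exp (-u)) :=
        div_nonneg (Real.exp_pos _).le (sub_nonneg.2 (Real.exp_le_one_iff.2 (by linarith)))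
      nlinarith [mul_le_mul_of_nonneg_right (Real.exp_le_exp.2 hle) hg0]
    linarith [TmixV_mul_lamV_le (V n) hc' (hc'c.trans_lt hM) hu hbound]
  have hmax := hP'.trans_le (tauV_mul_lamV_le_max (V n) hc' hc'c hM)
  rcases lt_max_iff.1 hmax with hlog | hP
  · linarith [le_max_right K (Real.log (1 + c))]
  · linarith [le_max_left K (Real.log (1 + c))]

lemma isLapCutoffTime_tauV
    (h : ∀ c > (0 : ℝ), Tendsto (fun n => tauV (V n) c * lamV (V n) c) atTop atTop) :
    IsLapCutoffTime V fun n => tauV (V n) 1 := by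
  refine ⟨?_, fun a ha => ?_, fun a ⟨ha0, ha1⟩ => ?_⟩
  · filter_upwards [eventually_lt_measureReal_Ioi hdiv 1] with n hM
    exact tauV_pos (V n) one_pos hM
  · refine tendsto_order.2 ⟨fun b hb => Eventually.of_forall fun n => hb.trans_le (lap_nonneg _ _),
      fun ε hε => ?_⟩
    set c := min (ε / 2) 1
    have hc : 0 < c := by positivity
    have hg := (tendsto_exp_neg_div_one_sub_exp_neg (α := (a - 1) / 2) (β := (a - 1) ^ 2 / 2)
      (by linarith) (by nlinarith)).comp (h c hc)
    filter_upwards [hg.eventually (eventually_lt_nhds (half_pos hε)),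
      eventually_tauV_le_tauV hdiv hc one_pos (h c hc), eventually_lt_measureReal_Ioi hdiv 1]
      with n hsmall hle hM
    have hMc : c < (V n).real (Ioi 0) := (min_le_right _ _).trans_lt hM
    have htau := tauV_pos (V n) hc hMc
    calc lap (V n) (a * tauV (V n) 1) ≤ lap (V n) (a * tauV (V n) c) :=
          lap_le_lap (V n) (by positivity) (by gcongr)
      _ ≤ c + Real.exp (-((a - 1) / 2 * (tauV (V n) c * lamV (V n) c))) /
            (1 - Real.exp (-((a - 1) ^ 2 / 2 * (tauV (V n) c * lamV (V n) c)))) :=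
          lap_mul_tauV_le (V n) hc hMc ha
      _ < ε := by
          simp only [Function.comp_apply] at hsmall
          linarith [min_le_left (ε / 2) 1]
  · have hexp := tendsto_atTop_add_const_right _ (-1) (Real.tendsto_exp_atTop.comp
      ((h 1 one_pos).const_mul_atTop (by linarith : (0 : ℝ) < (1 - a) / 2)))
    refine tendsto_atTop_mono' _ ?_ hexp
    filter_upwards [eventually_lt_measureReal_Ioi hdiv 1] with n hM
    simpa only [Function.comp_apply, ← sub_eq_add_neg] using
      exp_sub_one_le_lap_mul_tauV (V n) one_pos hM ha0 ha1

end Sequence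

theorem stmt_2_general (V : ℕ → Measure ℝ) [∀ n, IsFiniteMeasure (V n)]
    (hdiv : Tendsto (fun n => lap (V n) 0) atTop atTop) :
    List.TFAE
      [ LapCutoff V,
        ∀ ε > (0 : ℝ), ∀ c > (0 : ℝ),
          Tendsto (fun n => TmixV (V n) ε * lamV (V n) c) atTop atTop,
        ∃ ε > (0 : ℝ), ∀ c > (0 : ℝ),
          Tendsto (fun n => TmixV (V n) ε * lamV (V n) c) atTop atTop,
        ∀ c > (0 : ℝ),
          Tendsto (fun n => tauV (V n) c * lamV (V n) c) atTop atTop,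
        ∀ c' > (0 : ℝ), ∀ c > (0 : ℝ),
          Tendsto (fun n => tauV (V n) c' * lamV (V n) c) atTop atTop,
        ∃ c' > (0 : ℝ), ∀ c > (0 : ℝ),
          Tendsto (fun n => tauV (V n) c' * lamV (V n) c) atTop atTop ] := by
  tfae_have 1 → 2 := fun ⟨_, ht⟩ _ hε _ hc =>
    tendsto_TmixV_mul_lamV_of_isLapCutoffTime hdiv ht hε hc
  tfae_have 2 → 3 := fun h => ⟨1, one_pos, h 1 one_pos⟩
  tfae_have 3 → 4 := fun ⟨_, hε, h⟩ _ hc => tendsto_tauV_mul_lamV_of_TmixV hdiv hε h hc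
  tfae_have 4 → 1 := fun h => ⟨_, isLapCutoffTime_tauV hdiv h⟩
  tfae_have 4 → 5 := fun h _ hc' c hc =>
    tendsto_tauV_mul_lamV_of_tendsto hdiv hc hc' hc (h c hc) (h c hc)
  tfae_have 5 → 6 := fun h => ⟨1, one_pos, h 1 one_pos⟩
  tfae_have 6 → 4 := fun ⟨c', hc', h⟩ c hc =>
    tendsto_tauV_mul_lamV_of_tendsto hdiv hc' hc hc (h c' hc') (h c hc)
  tfae_finish

theorem stmt_2 (V : ℕ → Measure ℝ) [∀ n, IsFiniteMeasure (V n)]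
    (hsupp : ∀ n, V n (Iic 0) = 0)
    (hdiv : Tendsto (fun n => lap (V n) 0) atTop atTop) :
    List.TFAE
      [ LapCutoff V,
        ∀ ε > (0 : ℝ), ∀ c > (0 : ℝ),
          Tendsto (fun n => TmixV (V n) ε * lamV (V n) c) atTop atTop,
        ∃ ε > (0 : ℝ), ∀ c > (0 : ℝ),
          Tendsto (fun n => TmixV (V n) ε * lamV (V n) c) atTop atTop,
        ∀ c > (0 : ℝ),
          Tendsto (fun n => tauV (V n) c * lamV (V n) c) atTop atTop,
        ∀ c' > (0 : ℝ), ∀ c > (0 : ℝ),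
          Tendsto (fun n => tauV (V n) c' * lamV (V n) c) atTop atTop,
        ∃ c' > (0 : ℝ), ∀ c > (0 : ℝ),
          Tendsto (fun n => tauV (V n) c' * lamV (V n) c) atTop atTop ] :=
  stmt_2_general V hdiv
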